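/- Let A1, A2, A3 be square complex matrices each with norm at most ‖A‖/3. Then for every positive integer n, ‖(exp(A1/n)·exp(A2/n)·exp(A3/n))^n − exp(A1 + A2 + A3)‖ ≤ a/n, where a = ‖A‖²·exp(2‖A‖). -/

import Mathlib

/-!
Write `T = exp(A1/n) exp(A2/n) exp(A3/n)` and `V = exp((A1 + A2 + A3)/n)`, so that
`V ^ n = exp (A1 + A2 + A3)`. Since `T` and `V` agree up to first order, comparing both with
the majorant series of `exp` gives the local error `‖T - V‖ ≤ (C/n)² e^{C/n}`. Telescoping
`T ^ n - V ^ n = ∑ T ^ k (T - V) V ^ (n-1-k)` with `‖T‖, ‖V‖ ≤ e^{C/n}` multiplies this by at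
most `n e^C`, which gives `C² e^{C + C/n} / n ≤ C² e^{2C} / n`.
-/

open NormedSpace Finset
open scoped Nat

theorem Real.exp_sub_sum_range_le_pow_div_factorial_mul_exp {t : ℝ} (ht : 0 ≤ t) (N : ℕ) :
    Real.exp t - ∑ k ∈ range N, t ^ k / k ! ≤ t ^ N / N ! * Real.exp t := by
  have hexp : HasSum (fun k ↦ t ^ k / k !) (Real.exp t) := by
    rw [Real.exp_eq_exp_ℝ]
    exact expSeries_div_hasSum_exp t
  refine hasSum_le (fun k ↦ ?_) ((hasSum_nat_add_iff' N).2 hexp) (hexp.mul_left _)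
  have hfac : (N ! * k ! : ℝ) ≤ (k + N)! := by
    rw [add_comm]
    exact_mod_cast Nat.le_of_dvd (Nat.factorial_pos _)
      (Nat.factorial_mul_factorial_dvd_factorial_add N k)
  rw [div_mul_div_comm, ← pow_add, add_comm N k]
  exact div_le_div_of_nonneg_left (by positivity) (by positivity) hfac

section NormedRing

/-! A normed ring may have `‖1‖ > 1`, so instead of `‖P‖ ≤ E` the bounds below carry the
hypothesis `‖P - 1‖ ≤ E - 1`, which is stable under products and still bounds multiplication
by `P` by `E`. -/

variable {R : Type*} [NormedRing R]

theorem norm_mul_sub_one_le {P Q : R} {E F : ℝ} (hP : ‖P - 1‖ ≤ E - 1) (hQ : ‖Q - 1‖ ≤ F - 1) :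
    ‖P * Q - 1‖ ≤ E * F - 1 :=
  calc ‖P * Q - 1‖ = ‖(P - 1) + (Q - 1) + (P - 1) * (Q - 1)‖ := by congr 1; noncomm_ring
    _ ≤ (E - 1) + (F - 1) + (E - 1) * (F - 1) :=
        norm_add₃_le.trans <| add_le_add_three hP hQ <| (norm_mul_le _ _).trans <|
          mul_le_mul hP hQ (norm_nonneg _) ((norm_nonneg _).trans hP)
    _ = E * F - 1 := by ring

theorem norm_mul_sub_one_sub_add_le {P Q p q : R} {E F a b : ℝ} (hP : ‖P - 1‖ ≤ E - 1)
    (hQ : ‖Q - 1‖ ≤ F - 1) (hp : ‖P - 1 - p‖ ≤ E - 1 - a) (hq : ‖Q - 1 - q‖ ≤ F - 1 - b) :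
    ‖P * Q - 1 - (p + q)‖ ≤ E * F - 1 - (a + b) :=
  calc ‖P * Q - 1 - (p + q)‖ = ‖(P - 1 - p) + (Q - 1 - q) + (P - 1) * (Q - 1)‖ := by
        congr 1; noncomm_ring
    _ ≤ (E - 1 - a) + (F - 1 - b) + (E - 1) * (F - 1) :=
        norm_add₃_le.trans <| add_le_add_three hp hq <| (norm_mul_le _ _).trans <|
          mul_le_mul hP hQ (norm_nonneg _) ((norm_nonneg _).trans hP)
    _ = E * F - 1 - (a + b) := by ring

theorem norm_pow_sub_one_le {P : R} {E : ℝ} (hP : ‖P - 1‖ ≤ E - 1) (n : ℕ) :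
    ‖P ^ n - 1‖ ≤ E ^ n - 1 := by
  induction n with
  | zero => simp
  | succ n ih => simpa only [pow_succ] using norm_mul_sub_one_le ih hP

theorem norm_mul_le_of_norm_sub_one_le {P : R} {E : ℝ} (hP : ‖P - 1‖ ≤ E - 1) (w : R) :
    ‖P * w‖ ≤ E * ‖w‖ :=
  calc ‖P * w‖ = ‖w + (P - 1) * w‖ := by congr 1; noncomm_ring
    _ ≤ ‖w‖ + (E - 1) * ‖w‖ :=
        (norm_add_le _ _).trans <| add_le_add_right ((norm_mul_le _ _).trans <|
          mul_le_mul_of_nonneg_right hP (norm_nonneg _)) _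
    _ = E * ‖w‖ := by ring

theorem norm_mul_le_of_norm_sub_one_le' {P : R} {E : ℝ} (hP : ‖P - 1‖ ≤ E - 1) (w : R) :
    ‖w * P‖ ≤ ‖w‖ * E :=
  calc ‖w * P‖ = ‖w + w * (P - 1)‖ := by congr 1; noncomm_ring
    _ ≤ ‖w‖ + ‖w‖ * (E - 1) :=
        (norm_add_le _ _).trans <| add_le_add_right ((norm_mul_le _ _).trans <|
          mul_le_mul_of_nonneg_left hP (norm_nonneg _)) _
    _ = ‖w‖ * E := by ring

theorem norm_pow_sub_pow_le {T V : R} {r : ℝ} (hT : ‖T - 1‖ ≤ r - 1) (hV : ‖V - 1‖ ≤ r - 1)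
    (n : ℕ) : ‖T ^ n - V ^ n‖ ≤ n * r ^ n * ‖T - V‖ := by
  have hr : 1 ≤ r := by linarith [(norm_nonneg _).trans hT]
  induction n with
  | zero => simp
  | succ n ih =>
    calc ‖T ^ (n + 1) - V ^ (n + 1)‖ = ‖T ^ n * (T - V) + (T ^ n - V ^ n) * V‖ := by
          congr 1; noncomm_ring
      _ ≤ r ^ n * ‖T - V‖ + n * r ^ n * ‖T - V‖ * r :=
          (norm_add_le _ _).trans <| add_le_add
            (norm_mul_le_of_norm_sub_one_le (norm_pow_sub_one_le hT n) _)
            ((norm_mul_le_of_norm_sub_one_le' hV _).trans <|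
              mul_le_mul_of_nonneg_right ih (by linarith))
      _ = r ^ n * ‖T - V‖ + n * r ^ (n + 1) * ‖T - V‖ := by ring
      _ ≤ r ^ (n + 1) * ‖T - V‖ + n * r ^ (n + 1) * ‖T - V‖ := by
          gcongr
          exact n.le_succ
      _ = (n + 1 : ℕ) * r ^ (n + 1) * ‖T - V‖ := by push_cast; ring

end NormedRing

section BanachAlgebra

variable {𝔸 : Type*} [NormedRing 𝔸] [NormedAlgebra ℚ 𝔸] [CompleteSpace 𝔸]

theorem norm_exp_sub_sum_range_le {x : 𝔸} {t : ℝ} (hx : ‖x‖ ≤ t) {N : ℕ} (hN : 0 < N) :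
    ‖exp x - ∑ k ∈ range N, (k !⁻¹ : ℚ) • x ^ k‖ ≤ Real.exp t - ∑ k ∈ range N, t ^ k / k ! := by
  have hexp : HasSum (fun k ↦ t ^ k / k !) (Real.exp t) := by
    rw [Real.exp_eq_exp_ℝ]
    exact expSeries_div_hasSum_exp t
  refine ((hasSum_nat_add_iff' N).2 (exp_series_hasSum_exp' x)).norm_le_of_bounded
    ((hasSum_nat_add_iff' N).2 hexp) fun k ↦ ?_
  rw [norm_smul, norm_inv, ← Rat.norm_cast_real, Rat.cast_natCast, Real.norm_natCast,
    inv_mul_eq_div]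
  gcongr
  exact (norm_pow_le' x (by omega)).trans (pow_le_pow_left₀ (norm_nonneg x) hx _)

theorem norm_exp_sub_one_le {x : 𝔸} {t : ℝ} (hx : ‖x‖ ≤ t) : ‖exp x - 1‖ ≤ Real.exp t - 1 := by
  simpa using norm_exp_sub_sum_range_le hx (N := 1) (by norm_num)

theorem norm_exp_sub_one_sub_le {x : 𝔸} {t : ℝ} (hx : ‖x‖ ≤ t) :
    ‖exp x - 1 - x‖ ≤ Real.exp t - 1 - t := by
  simpa [sum_range_succ, sub_sub] using norm_exp_sub_sum_range_le hx (N := 2) (by norm_num)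

theorem norm_exp_mul_exp_mul_exp_sub_one_le (x y z : 𝔸) :
    ‖exp x * exp y * exp z - 1‖ ≤ Real.exp (‖x‖ + ‖y‖ + ‖z‖) - 1 := by
  rw [Real.exp_add, Real.exp_add]
  exact norm_mul_sub_one_le (norm_mul_sub_one_le (norm_exp_sub_one_le le_rfl)
    (norm_exp_sub_one_le le_rfl)) (norm_exp_sub_one_le le_rfl)

theorem norm_exp_mul_exp_mul_exp_sub_one_sub_le (x y z : 𝔸) :
    ‖exp x * exp y * exp z - 1 - (x + y + z)‖ ≤
      Real.exp (‖x‖ + ‖y‖ + ‖z‖) - 1 - (‖x‖ + ‖y‖ + ‖z‖) := by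
  rw [Real.exp_add, Real.exp_add]
  exact norm_mul_sub_one_sub_add_le
    (norm_mul_sub_one_le (norm_exp_sub_one_le le_rfl) (norm_exp_sub_one_le le_rfl))
    (norm_exp_sub_one_le le_rfl)
    (norm_mul_sub_one_sub_add_le (norm_exp_sub_one_le le_rfl) (norm_exp_sub_one_le le_rfl)
      (norm_exp_sub_one_sub_le le_rfl) (norm_exp_sub_one_sub_le le_rfl))
    (norm_exp_sub_one_sub_le le_rfl)

theorem norm_exp_mul_exp_mul_exp_sub_exp_add_add_le (x y z : 𝔸) :
    ‖exp x * exp y * exp z - exp (x + y + z)‖ ≤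
      (‖x‖ + ‖y‖ + ‖z‖) ^ 2 * Real.exp (‖x‖ + ‖y‖ + ‖z‖) := by
  set s := ‖x‖ + ‖y‖ + ‖z‖
  have hprod := norm_exp_mul_exp_mul_exp_sub_one_sub_le x y z
  have hsum : ‖exp (x + y + z) - 1 - (x + y + z)‖ ≤ Real.exp s - 1 - s :=
    norm_exp_sub_one_sub_le norm_add₃_le
  have hreal : Real.exp s - 1 - s ≤ s ^ 2 / 2 * Real.exp s := by
    simpa [sum_range_succ, sub_sub] using
      Real.exp_sub_sum_range_le_pow_div_factorial_mul_exp (by positivity : 0 ≤ s) 2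
  calc ‖exp x * exp y * exp z - exp (x + y + z)‖
      = ‖(exp x * exp y * exp z - 1 - (x + y + z)) - (exp (x + y + z) - 1 - (x + y + z))‖ := by
        congr 1; abel
    _ ≤ 2 * (Real.exp s - 1 - s) := (norm_sub_le _ _).trans (by linarith)
    _ ≤ s ^ 2 * Real.exp s := by linarith

end BanachAlgebra

/-- Zeroth-order corrector estimate for three layers:
`‖(exp(A1/n)·exp(A2/n)·exp(A3/n))^n − exp(A1 + A2 + A3)‖ ≤ a/n`
with `a = C²·e^{2C}` when each `‖Ai‖ ≤ C/3`. -/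
theorem zeroth_order_corrector_three_layers {𝔸 : Type*} [NormedRing 𝔸]
    [NormedAlgebra ℂ 𝔸] [CompleteSpace 𝔸] (A1 A2 A3 : 𝔸) (C : ℝ)
    (h1 : ‖A1‖ ≤ C / 3) (h2 : ‖A2‖ ≤ C / 3) (h3 : ‖A3‖ ≤ C / 3)
    (n : ℕ) (hn : 0 < n) :
    ‖(exp ((n : ℂ)⁻¹ • A1) * exp ((n : ℂ)⁻¹ • A2) * exp ((n : ℂ)⁻¹ • A3)) ^ n -
        exp (A1 + A2 + A3)‖ ≤ C ^ 2 * Real.exp (2 * C) / n := by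
  -- `exp` does not depend on this instance; it only gives access to the `ℚ`-algebra API.
  let _ : NormedAlgebra ℚ 𝔸 := .restrictScalars ℚ ℂ 𝔸
  have hC : 0 ≤ C := by linarith [norm_nonneg A1]
  have hn' : (1 : ℝ) ≤ n := by exact_mod_cast hn
  have hscale (A : 𝔸) : ‖(n : ℂ)⁻¹ • A‖ = ‖A‖ / n := by
    rw [norm_smul, norm_inv, Complex.norm_natCast, inv_mul_eq_div]
  set x1 := (n : ℂ)⁻¹ • A1
  set x2 := (n : ℂ)⁻¹ • A2
  set x3 := (n : ℂ)⁻¹ • A3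
  set t := C / n
  have hs : ‖x1‖ + ‖x2‖ + ‖x3‖ ≤ t := by
    rw [hscale, hscale, hscale, ← add_div, ← add_div]
    exact div_le_div_of_nonneg_right (by linarith) (by positivity)
  have hT : ‖exp x1 * exp x2 * exp x3 - 1‖ ≤ Real.exp t - 1 :=
    (norm_exp_mul_exp_mul_exp_sub_one_le x1 x2 x3).trans (by gcongr)
  have hV : ‖exp (x1 + x2 + x3) - 1‖ ≤ Real.exp t - 1 :=
    norm_exp_sub_one_le (norm_add₃_le.trans hs)
  have hlocal : ‖exp x1 * exp x2 * exp x3 - exp (x1 + x2 + x3)‖ ≤ t ^ 2 * Real.exp t :=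
    (norm_exp_mul_exp_mul_exp_sub_exp_add_add_le x1 x2 x3).trans (by gcongr)
  have hVn : exp (x1 + x2 + x3) ^ n = exp (A1 + A2 + A3) := by
    rw [← exp_nsmul, ← Nat.cast_smul_eq_nsmul ℂ, ← smul_add, ← smul_add, smul_smul,
      mul_inv_cancel₀ (by exact_mod_cast hn.ne'), one_smul]
  calc _ = ‖(exp x1 * exp x2 * exp x3) ^ n - exp (x1 + x2 + x3) ^ n‖ := by rw [hVn]
    _ ≤ n * Real.exp t ^ n * (t ^ 2 * Real.exp t) :=
        (norm_pow_sub_pow_le hT hV n).trans (by gcongr)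
    _ = C ^ 2 * Real.exp (C + t) / n := by
        have hnt : (n : ℝ) * t = C := mul_div_cancel₀ C (by positivity)
        rw [← Real.exp_nat_mul, hnt, Real.exp_add, ← hnt]
        field_simp
    _ ≤ C ^ 2 * Real.exp (2 * C) / n := by
        have : t ≤ C := div_le_self hC hn'
        gcongr
        linarith
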